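/- Let u be a smooth real-valued function on an open set of ℂ²ⁿ whose complex Hessian (∂²u/∂z_i∂z̄_j) is Hermitian positive semidefinite. Write the blocks A = (∂_{z̄_{2l}}∂_{z_{2k}}u)_{l,k}, B = (∂_{z̄_{2l+1}}∂_{z_{2k}}u)_{l,k}, C = (∂_{z̄_{2l+1}}∂_{z_{2k+1}}u)_{l,k} (n×n matrices). Then det([[A, B*],[B, C]] + [[C̄, −B̄],[−Bᵀ, Ā]]) ≥ det[[A, B*],[B, C]] at every point, where det[[A,B*],[B,C]] = det(∂²u/∂z_i∂z̄_j). -/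

import Mathlib

open Matrix
open scoped ComplexOrder

noncomputable section

/-- `ℝ^{4n} ≅ ℂ^{2n}` via `z_m = x_{2m} + (−1)^m x_{2m+1} i`. -/
abbrev En (n : ℕ) := EuclideanSpace ℝ (Fin (4 * n))

/-- Partial derivative in the `m`-th coordinate direction (junk value `0` out of range). -/
def pD {n : ℕ} (m : ℕ) (f : En n → ℂ) (x : En n) : ℂ :=
  if h : m < 4 * n then fderiv ℝ f x (EuclideanSpace.single ⟨m, h⟩ 1) else 0

/-- Wirtinger derivative `∂_{z_m} = (∂_{x_{2m}} − (−1)^m i ∂_{x_{2m+1}})/2`. -/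
def Wz {n : ℕ} (m : ℕ) (f : En n → ℂ) (x : En n) : ℂ :=
  (pD (2 * m) f x - (-1 : ℂ) ^ m * Complex.I * pD (2 * m + 1) f x) / 2

/-- Conjugate Wirtinger derivative `∂_{z̄_m} = (∂_{x_{2m}} + (−1)^m i ∂_{x_{2m+1}})/2`. -/
def Wzb {n : ℕ} (m : ℕ) (f : En n → ℂ) (x : En n) : ℂ :=
  (pD (2 * m) f x + (-1 : ℂ) ^ m * Complex.I * pD (2 * m + 1) f x) / 2

/-- Entrywise complex conjugate of a matrix. -/
def mconj {m k : Type*} (M : Matrix m k ℂ) : Matrix m k ℂ := M.map (starRingEnd ℂ)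


lemma pD_conj {n : ℕ} (m : ℕ) (f : En n → ℂ) (x : En n) :
    pD m (fun y => (starRingEnd ℂ) (f y)) x = (starRingEnd ℂ) (pD m f x) := by
  unfold pD
  split
  · have h := Complex.conjCLE.comp_fderiv (f := f) (x := x)
    have h2 : (fun y => (starRingEnd ℂ) (f y)) = ⇑Complex.conjCLE ∘ f := rfl
    rw [h2, h]
    rfl
  · simp

lemma conj_Wz {n : ℕ} (m : ℕ) (f : En n → ℂ) (x : En n) :
    (starRingEnd ℂ) (Wz m f x) = Wzb m (fun y => (starRingEnd ℂ) (f y)) x := by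
  unfold Wz Wzb
  rw [pD_conj, pD_conj]
  simp only [map_div₀, map_sub, _root_.map_mul, map_pow, map_neg, RingHom.map_one,
    Complex.conj_I, map_ofNat]
  ring

lemma conj_Wzb {n : ℕ} (m : ℕ) (f : En n → ℂ) (x : En n) :
    (starRingEnd ℂ) (Wzb m f x) = Wz m (fun y => (starRingEnd ℂ) (f y)) x := by
  unfold Wz Wzb
  rw [pD_conj, pD_conj]
  simp only [map_div₀, map_add, _root_.map_mul, map_pow, map_neg, RingHom.map_one,
    Complex.conj_I, map_ofNat]
  ring

section DetLemmas
variable {ι : Type*} [Fintype ι] [DecidableEq ι]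

lemma aux_det_nonneg {R : Matrix ι ι ℂ} (hR : R.PosSemidef) : 0 ≤ R.det := by
  rw [hR.1.det_eq_prod_eigenvalues, ← RCLike.ofReal_prod]
  exact RCLike.ofReal_nonneg.mpr (Finset.prod_nonneg fun i _ => hR.eigenvalues_nonneg i)

lemma aux_det_le_one {R : Matrix ι ι ℂ} (hR : R.PosSemidef) (hR' : (1 - R).PosSemidef) :
    R.det ≤ 1 := by
  rw [hR.1.det_eq_prod_eigenvalues, ← RCLike.ofReal_prod]
  have h1 : ∀ i, hR.1.eigenvalues i ≤ 1 := by
    intro i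
    set U : Matrix ι ι ℂ := (hR.1.eigenvectorUnitary : Matrix ι ι ℂ) with hUdef
    have hU1 : star U * U = 1 := mem_unitaryGroup_iff'.mp hR.1.eigenvectorUnitary.2
    have hU2 : U * star U = 1 := mem_unitaryGroup_iff.mp hR.1.eigenvectorUnitary.2
    have key : star U * (1 - R) * U =
        (1 : Matrix ι ι ℂ) - diagonal (RCLike.ofReal ∘ hR.1.eigenvalues) := by
      rw [Matrix.mul_sub, Matrix.sub_mul, Matrix.mul_one, hU1]
      congr 1
      conv_lhs => rw [hR.1.spectral_theorem, Unitary.conjStarAlgAut_apply]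
      rw [← hUdef]
      calc star U * (U * diagonal (RCLike.ofReal ∘ hR.1.eigenvalues) * star U) * U
          = (star U * U) * diagonal (RCLike.ofReal ∘ hR.1.eigenvalues) * (star U * U) := by
            simp only [Matrix.mul_assoc]
        _ = diagonal (RCLike.ofReal ∘ hR.1.eigenvalues) := by
            rw [hU1, Matrix.one_mul, Matrix.mul_one]
    have hdiag : ((1 : Matrix ι ι ℂ) - diagonal (RCLike.ofReal ∘ hR.1.eigenvalues)).PosSemidef := by
      rw [← key]
      have := hR'.conjTranspose_mul_mul_same U
      simpa [Matrix.star_eq_conjTranspose] using this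
    have e : (diagonal (fun j => 1 - (RCLike.ofReal ∘ hR.1.eigenvalues) j) : Matrix ι ι ℂ) =
        1 - diagonal (RCLike.ofReal ∘ hR.1.eigenvalues) := by
      ext j k
      by_cases h : j = k <;>
        simp [Matrix.diagonal_apply, Matrix.one_apply, Matrix.sub_apply, h]
    have hdiag2 : (diagonal (fun j => 1 - (RCLike.ofReal ∘ hR.1.eigenvalues) j) :
        Matrix ι ι ℂ).PosSemidef := by rwa [e]
    have h5 := (posSemidef_diagonal_iff.mp hdiag2) i
    have h6 : (RCLike.ofReal (hR.1.eigenvalues i) : ℂ) ≤ RCLike.ofReal (1 : ℝ) := by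
      simpa [Function.comp] using sub_nonneg.mp h5
    exact RCLike.ofReal_le_ofReal.mp h6
  have hle : (∏ i, hR.1.eigenvalues i) ≤ 1 :=
    Finset.prod_le_one (fun i _ => hR.eigenvalues_nonneg i) (fun i _ => h1 i)
  calc ((∏ i, hR.1.eigenvalues i : ℝ) : ℂ) ≤ ((1 : ℝ) : ℂ) := RCLike.ofReal_le_ofReal.mpr hle
    _ = 1 := RCLike.ofReal_one

open scoped MatrixOrder in
lemma det_le_det_add {P Q : Matrix ι ι ℂ} (hP : P.PosSemidef) (hQ : Q.PosSemidef) :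
    P.det ≤ (P + Q).det := by
  have hS : (P + Q).PosSemidef := hP.add hQ
  by_cases hdet : (P + Q).det = 0
  · rw [hdet]
    obtain ⟨v, hv0, hv⟩ := (Matrix.exists_mulVec_eq_zero_iff).mpr hdet
    have h1 : star v ⬝ᵥ P *ᵥ v + star v ⬝ᵥ Q *ᵥ v = 0 := by
      rw [← dotProduct_add, ← add_mulVec, hv, dotProduct_zero]
    have hPv : star v ⬝ᵥ P *ᵥ v = 0 :=
      ((add_eq_zero_iff_of_nonneg (hP.dotProduct_mulVec_nonneg v) (hQ.dotProduct_mulVec_nonneg v)).mp h1).1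
    have h2 : P *ᵥ v = 0 := (hP.dotProduct_mulVec_zero_iff v).mp hPv
    have h3 : P.det = 0 := Matrix.exists_mulVec_eq_zero_iff.mp ⟨v, hv0, h2⟩
    rw [h3]
  · set S := P + Q with hSdef
    set T := (CFC.sqrt S)⁻¹ with hT
    have hsq : (CFC.sqrt S) * (CFC.sqrt S) = S := CFC.sqrt_mul_sqrt_self S (nonneg_iff_posSemidef.mpr hS)
    have hdsq : IsUnit (CFC.sqrt S).det := by
      have h : (CFC.sqrt S).det * (CFC.sqrt S).det = S.det := by rw [← det_mul, hsq]
      refine isUnit_iff_ne_zero.mpr fun h0 => hdet ?_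
      rw [← h, h0, mul_zero]
    have hTs : T * (CFC.sqrt S) = 1 := nonsing_inv_mul _ hdsq
    have hsT : (CFC.sqrt S) * T = 1 := mul_nonsing_inv _ hdsq
    have hTH : Tᴴ = T := ((nonneg_iff_posSemidef.mp (CFC.sqrt_nonneg S)).1.inv)
    have hR : (Tᴴ * P * T).PosSemidef := hP.conjTranspose_mul_mul_same T
    have hST : Tᴴ * S * T = 1 := by
      rw [hTH, ← hsq]
      simp only [← Matrix.mul_assoc]
      rw [hTs, Matrix.one_mul, hsT]
    have h1R : 1 - Tᴴ * P * T = Tᴴ * Q * T := by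
      rw [← hST, hSdef, Matrix.mul_add, Matrix.add_mul, add_sub_cancel_left]
    have hle := aux_det_le_one hR (h1R ▸ hQ.conjTranspose_mul_mul_same T)
    have key : P = (CFC.sqrt S) * (Tᴴ * P * T) * (CFC.sqrt S) := by
      rw [hTH, ← Matrix.mul_assoc, ← Matrix.mul_assoc, Matrix.mul_assoc _ _ (CFC.sqrt S),
        hTs, hsT, Matrix.one_mul, Matrix.mul_one]
    have hdetS : S.det = (CFC.sqrt S).det * (CFC.sqrt S).det := by rw [← det_mul, hsq]
    calc P.det = S.det * (Tᴴ * P * T).det := by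
          conv_lhs => rw [key]
          rw [det_mul, det_mul, hdetS]; ring
      _ ≤ S.det * 1 := mul_le_mul_of_nonneg_left hle (aux_det_nonneg hS)
      _ = S.det := mul_one _

end DetLemmas

/-- interleaving equivalence -/
def il (n : ℕ) : Fin n ⊕ Fin n ≃ Fin (2 * n) where
  toFun := Sum.elim (fun l => ⟨2 * l.val, by have := l.2; omega⟩)
    (fun l => ⟨2 * l.val + 1, by have := l.2; omega⟩)
  invFun q := if h : q.val % 2 = 0 then Sum.inl ⟨q.val / 2, by have := q.2; omega⟩
    else Sum.inr ⟨q.val / 2, by have := q.2; omega⟩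
  left_inv := by
    rintro (⟨l, hl⟩ | ⟨l, hl⟩)
    · have h : (2 * l) % 2 = 0 := by omega
      dsimp only [Sum.elim_inl]
      simp only [h, dif_pos h, dite_true, Sum.inl.injEq, Fin.mk.injEq]
      omega
    · have h : ¬ ((2 * l + 1) % 2 = 0) := by omega
      dsimp only [Sum.elim_inr]
      simp only [h, dif_neg h, dite_false, not_false_iff, Sum.inr.injEq, Fin.mk.injEq]
      omega
  right_inv := by
    rintro ⟨q, hq⟩
    by_cases h : q % 2 = 0
    · simp only [dif_pos h, Sum.elim_inl, Fin.mk.injEq]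
      omega
    · simp only [dif_neg h, Sum.elim_inr, Fin.mk.injEq]
      omega


theorem stmt_15 (n : ℕ) (s : Set (En n)) (hs : IsOpen s) (u : En n → ℝ)
    (hu : ContDiffOn ℝ (⊤ : ℕ∞) u s)
    -- the complex Hessian `(∂²u/∂z_i∂z̄_j)_{i,j}`
    (Hess : En n → Matrix (Fin (2 * n)) (Fin (2 * n)) ℂ)
    (hHess : ∀ x, ∀ i j : Fin (2 * n),
      Hess x i j = Wz i.val (fun y => Wzb j.val (fun w => (u w : ℂ)) y) x)
    (hPSD : ∀ x ∈ s, (Hess x).PosSemidef)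
    -- the blocks `A = (∂_{z̄_{2l}}∂_{z_{2k}}u)`, `B = (∂_{z̄_{2l+1}}∂_{z_{2k}}u)`,
    -- `C = (∂_{z̄_{2l+1}}∂_{z_{2k+1}}u)`
    (A B C : En n → Matrix (Fin n) (Fin n) ℂ)
    (hA : ∀ x, ∀ l k : Fin n,
      A x l k = Wzb (2 * l.val) (fun y => Wz (2 * k.val) (fun w => (u w : ℂ)) y) x)
    (hB : ∀ x, ∀ l k : Fin n,
      B x l k = Wzb (2 * l.val + 1) (fun y => Wz (2 * k.val) (fun w => (u w : ℂ)) y) x)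
    (hC : ∀ x, ∀ l k : Fin n,
      C x l k = Wzb (2 * l.val + 1) (fun y => Wz (2 * k.val + 1) (fun w => (u w : ℂ)) y) x) :
    ∀ x ∈ s,
      (fromBlocks (A x) ((B x)ᴴ) (B x) (C x)).det =
        (Hess x).det ∧
      (fromBlocks (A x) ((B x)ᴴ) (B x) (C x)).det ≤
        (fromBlocks (A x) ((B x)ᴴ) (B x) (C x) +
          fromBlocks (mconj (C x)) (-(mconj (B x))) (-((B x)ᵀ)) (mconj (A x))).det := by
  intro x hx
  have hherm := (hPSD x hx).1
  have happ : ∀ i j : Fin (2 * n), (starRingEnd ℂ) (Hess x j i) = Hess x i j := by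
    intro i j
    have := congrFun (congrFun hherm i) j
    rwa [conjTranspose_apply] at this
  -- key identity: `∂_{z̄ᵢ}∂_{z_j} u = Hess j i`
  have key : ∀ i j : Fin (2 * n),
      Wzb i.val (fun y => Wz j.val (fun w => (u w : ℂ)) y) x = Hess x j i := by
    intro i j
    have h1 : (starRingEnd ℂ) (Hess x i j) =
        Wzb i.val (fun y => Wz j.val (fun w => (u w : ℂ)) y) x := by
      rw [hHess x i j, conj_Wz]
      congr 1
      funext y
      rw [conj_Wzb]
      congr 1
      funext w
      exact Complex.conj_ofReal _
    rw [← h1, happ]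
  -- identify the entries of the blocks with entries of `Hess`
  have hA' : ∀ l k : Fin n, A x l k = Hess x ⟨2 * k.val, by omega⟩ ⟨2 * l.val, by omega⟩ := by
    intro l k
    rw [hA x l k]
    exact key ⟨2 * l.val, by omega⟩ ⟨2 * k.val, by omega⟩
  have hB' : ∀ l k : Fin n,
      B x l k = Hess x ⟨2 * k.val, by omega⟩ ⟨2 * l.val + 1, by omega⟩ := by
    intro l k
    rw [hB x l k]
    exact key ⟨2 * l.val + 1, by omega⟩ ⟨2 * k.val, by omega⟩
  have hC' : ∀ l k : Fin n,
      C x l k = Hess x ⟨2 * k.val + 1, by omega⟩ ⟨2 * l.val + 1, by omega⟩ := by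
    intro l k
    rw [hC x l k]
    exact key ⟨2 * l.val + 1, by omega⟩ ⟨2 * k.val + 1, by omega⟩
  -- the first block matrix is a transposed re-indexing of `Hess`
  have hMdef : fromBlocks (A x) ((B x)ᴴ) (B x) (C x) =
      ((Hess x).submatrix (il n) (il n))ᵀ := by
    ext i j
    rcases i with l | l <;> rcases j with k | k <;>
      simp only [fromBlocks_apply₁₁, fromBlocks_apply₁₂, fromBlocks_apply₂₁,
        fromBlocks_apply₂₂, transpose_apply, submatrix_apply, il, Equiv.coe_fn_mk,
        Sum.elim_inl, Sum.elim_inr, conjTranspose_apply]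
    · exact hA' l k
    · rw [← happ, ← hB' k l]; rfl
    · exact hB' l k
    · exact hC' l k
  have hMps : (fromBlocks (A x) ((B x)ᴴ) (B x) (C x)).PosSemidef := by
    rw [hMdef]
    exact ((hPSD x hx).submatrix (il n)).transpose
  constructor
  · rw [hMdef, det_transpose, det_submatrix_equiv_self]
  · -- the second block matrix is `Eᴴ * (Hess.submatrix e' e') * E` for a sign diagonal `E`
    set e' : Fin n ⊕ Fin n → Fin (2 * n) :=
      Sum.elim (fun l => ⟨2 * l.val + 1, by omega⟩) (fun l => ⟨2 * l.val, by omega⟩) with he'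
    set σ : Fin n ⊕ Fin n → ℂ := Sum.elim (fun _ => 1) (fun _ => -1) with hσ
    have hDdef : fromBlocks (mconj (C x)) (-(mconj (B x))) (-((B x)ᵀ)) (mconj (A x)) =
        (diagonal σ)ᴴ * ((Hess x).submatrix e' e') * (diagonal σ) := by
      rw [diagonal_conjTranspose]
      ext i j
      rw [mul_diagonal, diagonal_mul, submatrix_apply]
      rcases i with l | l <;> rcases j with k | k <;>
        simp only [hσ, he', Sum.elim_inl, Sum.elim_inr, Pi.star_apply, star_one, star_neg,
          one_mul, mul_one, neg_mul, mul_neg, neg_neg, fromBlocks_apply₁₁, fromBlocks_apply₁₂,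
          fromBlocks_apply₂₁, fromBlocks_apply₂₂, Matrix.neg_apply, transpose_apply,
          Matrix.map_apply, mconj, neg_inj]
      · rw [hC' l k, happ]
      · rw [hB' l k, happ]
      · exact hB' k l
      · rw [hA' l k, happ]
    have hDps : (fromBlocks (mconj (C x)) (-(mconj (B x))) (-((B x)ᵀ)) (mconj (A x))).PosSemidef := by
      rw [hDdef]
      exact ((hPSD x hx).submatrix e').conjTranspose_mul_mul_same (diagonal σ)
    exact det_le_det_add hMps hDps

end
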